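/- For any a > 0, the smaller root Q₁ := 1 + (e^{4a} + 4a)/(8a²) - e^{2a}√(e^{4a} + 8a)/(8a²) of the quadratic 4a²Q² - (4a(1+2a) + e^{4a})Q + (1+2a)² + e^{4a} satisfies 1 < Q₁ < (1+2a)/(2a). -/

import Mathlib

/-!
Write `c = e^{2a}`, so that `e^{4a} = c²` and `Q₁ - 1 = (c² + 4a - c√(c² + 8a)) / (8a²)`.
The lower bound is `c√(c² + 8a) < c² + 4a`, which after squaring says `0 < 16a²`; the upper
bound `Q₁ - 1 < 1/(2a)` is `c² < c√(c² + 8a)`.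
-/

open Real

lemma mul_sqrt_sq_add_lt {a : ℝ} (ha : 0 < a) (c : ℝ) :
    c * √(c ^ 2 + 8 * a) < c ^ 2 + 4 * a := by
  calc c * √(c ^ 2 + 8 * a) ≤ |c| * √(c ^ 2 + 8 * a) := by gcongr; exact le_abs_self c
    _ = √((c ^ 2) * (c ^ 2 + 8 * a)) := by rw [sqrt_mul (sq_nonneg c), sqrt_sq_eq_abs]
    _ < √((c ^ 2 + 4 * a) ^ 2) := by gcongr; nlinarith
    _ = c ^ 2 + 4 * a := sqrt_sq (by positivity)

lemma sq_lt_mul_sqrt_sq_add {a c : ℝ} (ha : 0 < a) (hc : 0 < c) :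
    c ^ 2 < c * √(c ^ 2 + 8 * a) := by
  have hlt : c < √(c ^ 2 + 8 * a) := lt_sqrt_of_sq_lt (by linarith)
  calc c ^ 2 = c * c := sq c
    _ < c * √(c ^ 2 + 8 * a) := mul_lt_mul_of_pos_left hlt hc

lemma one_lt_smaller_root_lt {a c : ℝ} (ha : 0 < a) (hc : 0 < c) :
    1 < 1 + (c ^ 2 + 4 * a) / (8 * a ^ 2) - c * √(c ^ 2 + 8 * a) / (8 * a ^ 2) ∧
    1 + (c ^ 2 + 4 * a) / (8 * a ^ 2) - c * √(c ^ 2 + 8 * a) / (8 * a ^ 2) <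
      (1 + 2 * a) / (2 * a) := by
  have h8a2 : (0 : ℝ) < 8 * a ^ 2 := by positivity
  have hQ : 1 + (c ^ 2 + 4 * a) / (8 * a ^ 2) - c * √(c ^ 2 + 8 * a) / (8 * a ^ 2) =
      1 + (c ^ 2 + 4 * a - c * √(c ^ 2 + 8 * a)) / (8 * a ^ 2) := by ring
  have hR : (1 + 2 * a) / (2 * a) = 1 + 4 * a / (8 * a ^ 2) := by field_simp; ring
  rw [hQ, hR]
  constructor
  · have := mul_sqrt_sq_add_lt ha c
    have : 0 < (c ^ 2 + 4 * a - c * √(c ^ 2 + 8 * a)) / (8 * a ^ 2) := by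
      apply div_pos <;> linarith
    linarith
  · have := sq_lt_mul_sqrt_sq_add ha hc
    gcongr
    linarith

theorem Q1_location (a : ℝ) (ha : 0 < a) :
    1 < 1 + (Real.exp (4 * a) + 4 * a) / (8 * a ^ 2) -
      Real.exp (2 * a) * Real.sqrt (Real.exp (4 * a) + 8 * a) / (8 * a ^ 2) ∧
    1 + (Real.exp (4 * a) + 4 * a) / (8 * a ^ 2) -
      Real.exp (2 * a) * Real.sqrt (Real.exp (4 * a) + 8 * a) / (8 * a ^ 2) <
      (1 + 2 * a) / (2 * a) := by
  have hexp : Real.exp (4 * a) = Real.exp (2 * a) ^ 2 := by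
    rw [← Real.exp_nat_mul]; ring_nf
  rw [hexp]
  exact one_lt_smaller_root_lt ha (Real.exp_pos _)
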